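/- Suppose y : [0,∞) → ℝ and z : [0,∞) → ℝ both solve the linear problem Ly = f with L y = y' + λ(1+γ∂_t^α)y and y(0) = z(0) = y₀, where ∂_t^α is the Riemann–Liouville derivative of order α ∈ (0,1), and both y, z are continuously differentiable with ∂_t^α y, ∂_t^α z continuous. Then y = z on [0,∞). -/

import Mathlib

open Real MeasureTheory intervalIntegral

noncomputable def rlDeriv (α : ℝ) (h : ℝ → ℝ) (t : ℝ) : ℝ :=
  deriv (fun s => (1 / Real.Gamma (1 - α)) * ∫ τ in (0:ℝ)..s, (s - τ) ^ (-α) * h τ) t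

open Set

/-!
Write `u = y - z` and `I h (t) = ∫₀ᵗ (t - τ)^(-α) h(τ) dτ`, so that `∂_t^α h = (I h)' / Γ(1 - α)`.
For `C¹` functions `h`, `I h` is continuous on `[0, ∞)` and differentiable on `(0, ∞)`, so
integrating the equation over `[0, t]` turns it into the homogeneous Volterra equation
`u(t) = -λ ∫₀ᵗ u - λ γ / Γ(1 - α) · I u (t)`.
Its only continuous solution is `0`: if `u = 0` on `[0, a]`, the maximum `M` of `|u|` on
`[a, a + δ]` satisfies `M ≤ (|λ| δ + |λ γ / Γ(1 - α)| δ^(1-α) / (1 - α)) M`, which forces `M = 0`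
once `δ` is small, and steps of length `δ` exhaust `[0, ∞)`.
-/

section Kernel

variable {α : ℝ}

lemma intervalIntegrable_sub_rpow_neg (hα1 : α < 1) (a b : ℝ) :
    IntervalIntegrable (fun τ => (b - τ) ^ (-α)) volume a b := by
  simpa using ((intervalIntegrable_rpow' (r := -α) (a := b - b) (b := b - a)
    (by linarith)).comp_sub_left b).symm

lemma integral_sub_rpow_neg (hα1 : α < 1) (a b : ℝ) :
    ∫ τ in a..b, (b - τ) ^ (-α) = (b - a) ^ (1 - α) / (1 - α) := by
  rw [integral_comp_sub_left (fun x => x ^ (-α)) b, sub_self,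
    integral_rpow (Or.inl (by linarith)), zero_rpow (by linarith)]
  ring_nf

lemma abs_integral_sub_rpow_neg_mul_le (hα1 : α < 1) {a b C : ℝ} {g : ℝ → ℝ}
    (hab : a ≤ b) (hC : ∀ r ∈ Ioc a b, |g r| ≤ C) :
    |∫ r in a..b, (b - r) ^ (-α) * g r| ≤ C * ((b - a) ^ (1 - α) / (1 - α)) := by
  have hle := norm_integral_le_of_norm_le (μ := volume) (f := fun r => (b - r) ^ (-α) * g r)
    (g := fun r => (b - r) ^ (-α) * C) hab (ae_of_all _ fun r hr => ?_)
    ((intervalIntegrable_sub_rpow_neg hα1 a b).mul_const C)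
  · rwa [intervalIntegral.integral_mul_const, integral_sub_rpow_neg hα1, mul_comm,
      Real.norm_eq_abs] at hle
  · have hk : 0 ≤ (b - r) ^ (-α) := rpow_nonneg (by linarith [hr.2]) _
    rw [norm_mul, Real.norm_of_nonneg hk, Real.norm_eq_abs]
    exact mul_le_mul_of_nonneg_left (hC r hr) hk

end Kernel

/-- `Γ(1 - α)` times the Riemann–Liouville integral of order `1 - α`. -/
noncomputable def abelIntegral (α : ℝ) (h : ℝ → ℝ) (t : ℝ) : ℝ :=
  ∫ τ in (0:ℝ)..t, (t - τ) ^ (-α) * h τ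

lemma rlDeriv_eq_deriv_abelIntegral (α : ℝ) (h : ℝ → ℝ) :
    rlDeriv α h = deriv (fun s => 1 / Gamma (1 - α) * abelIntegral α h s) :=
  rfl

@[simp]
lemma abelIntegral_zero (α : ℝ) (h : ℝ → ℝ) : abelIntegral α h 0 = 0 :=
  integral_same

section AbelIntegral

variable {α : ℝ} {h : ℝ → ℝ}

lemma abelIntegral_sub {y z : ℝ → ℝ} {t : ℝ} (hα1 : α < 1)
    (hy : ContinuousOn y (uIcc 0 t)) (hz : ContinuousOn z (uIcc 0 t)) :
    abelIntegral α (fun s => y s - z s) t = abelIntegral α y t - abelIntegral α z t := by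
  have hk := intervalIntegrable_sub_rpow_neg hα1 0 t
  simp only [abelIntegral, mul_sub]
  exact integral_sub (hk.mul_continuousOn hy) (hk.mul_continuousOn hz)

/-- The substitution `τ = t w` moves the singularity of the kernel to the fixed endpoint `w = 1`
and `t` into the integrand, where it can be differentiated under the integral sign. -/
lemma abelIntegral_eq_rpow_mul_integral {t : ℝ} (ht : 0 < t) :
    abelIntegral α h t = t ^ (1 - α) * ∫ w in (0:ℝ)..1, (1 - w) ^ (-α) * h (t * w) := by
  have hsubst := integral_comp_mul_left (a := 0) (b := 1)
    (fun τ => (t - τ) ^ (-α) * h τ) ht.ne'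
  simp only [mul_zero, mul_one, smul_eq_mul] at hsubst
  have hscale : ∫ w in (0:ℝ)..1, (t - t * w) ^ (-α) * h (t * w)
      = t ^ (-α) * ∫ w in (0:ℝ)..1, (1 - w) ^ (-α) * h (t * w) := by
    rw [← intervalIntegral.integral_const_mul]
    refine integral_congr fun w hw => ?_
    rw [uIcc_of_le zero_le_one] at hw
    rw [show t - t * w = t * (1 - w) by ring,
      mul_rpow ht.le (by linarith [hw.2] : (0:ℝ) ≤ 1 - w)]
    ring
  rw [abelIntegral, show 1 - α = 1 + -α by ring, rpow_add ht, rpow_one, mul_assoc, ← hscale,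
    hsubst, ← mul_assoc, mul_inv_cancel₀ ht.ne', one_mul]

lemma hasDerivAt_integral_kernel_mul_comp_mul (hα1 : α < 1)
    (hdiff : ∀ x ≥ 0, DifferentiableAt ℝ h x) (hderiv : ContinuousOn (deriv h) (Ici 0))
    {t : ℝ} (ht : 0 < t) :
    HasDerivAt (fun s => ∫ w in (0:ℝ)..1, (1 - w) ^ (-α) * h (s * w))
      (∫ w in (0:ℝ)..1, (1 - w) ^ (-α) * (deriv h (t * w) * w)) t := by
  have hk := intervalIntegrable_sub_rpow_neg hα1 0 1
  have hball : ∀ x ∈ Metric.ball t (t / 2), 0 ≤ x ∧ x ≤ 2 * t := fun x hx => by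
    rw [Metric.mem_ball, Real.dist_eq, abs_lt] at hx
    constructor <;> linarith
  have hmaps : ∀ x : ℝ, 0 ≤ x → MapsTo (fun w => x * w) (uIcc 0 1) (Ici 0) :=
    fun x hx w hw => by
      rw [uIcc_of_le zero_le_one] at hw
      exact mul_nonneg hx hw.1
  have hh : ContinuousOn h (Ici 0) := fun x hx => (hdiff x hx).continuousAt.continuousWithinAt
  have hcomp : ∀ x : ℝ, 0 ≤ x → ContinuousOn (fun w => h (x * w)) (uIcc 0 1) := fun x hx =>
    hh.comp (continuous_const_mul x).continuousOn (hmaps x hx)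
  obtain ⟨C, hC⟩ := isCompact_Icc.exists_bound_of_continuousOn
    (hderiv.mono (Icc_subset_Ici_self : Icc 0 (2 * t) ⊆ Ici 0))
  refine (hasDerivAt_integral_of_dominated_loc_of_deriv_le
    (F := fun x w => (1 - w) ^ (-α) * h (x * w))
    (F' := fun x w => (1 - w) ^ (-α) * (deriv h (x * w) * w))
    (bound := fun w => (1 - w) ^ (-α) * C)
    (Metric.ball_mem_nhds t (half_pos ht)) ?_ (hk.mul_continuousOn (hcomp t ht.le)) ?_ ?_
    (hk.mul_const C) ?_).2
  · filter_upwards [Metric.ball_mem_nhds t (half_pos ht)] with x hx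
    exact (hk.mul_continuousOn (hcomp x (hball x hx).1)).def'.aestronglyMeasurable
  · refine (hk.mul_continuousOn (f := fun w => (1 - w) ^ (-α)) (g := fun w => deriv h (t * w) * w)
      ?_).def'.aestronglyMeasurable
    exact (hderiv.comp (continuous_const_mul t).continuousOn (hmaps t ht.le)).mul continuousOn_id
  · refine ae_of_all _ fun w hw x hx => ?_
    rw [uIoc_of_le zero_le_one] at hw
    have hk0 : 0 ≤ (1 - w) ^ (-α) := rpow_nonneg (by linarith [hw.2]) _
    have hxw : x * w ∈ Icc 0 (2 * t) :=
      ⟨mul_nonneg (hball x hx).1 hw.1.le, by nlinarith [hball x hx, hw.1, hw.2]⟩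
    rw [norm_mul, Real.norm_of_nonneg hk0, norm_mul, Real.norm_of_nonneg hw.1.le]
    gcongr
    exact mul_le_of_le_one_right (norm_nonneg _) hw.2 |>.trans (hC _ hxw)
  · refine ae_of_all _ fun w hw x hx => ?_
    rw [uIoc_of_le zero_le_one] at hw
    exact (((hdiff _ (mul_nonneg (hball x hx).1 hw.1.le)).hasDerivAt.comp x
      (hasDerivAt_mul_const w)).const_mul _)

lemma differentiableAt_abelIntegral (hα1 : α < 1)
    (hdiff : ∀ x ≥ 0, DifferentiableAt ℝ h x) (hderiv : ContinuousOn (deriv h) (Ici 0))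
    {t : ℝ} (ht : 0 < t) : DifferentiableAt ℝ (abelIntegral α h) t := by
  have hG := (hasDerivAt_integral_kernel_mul_comp_mul hα1 hdiff hderiv ht).differentiableAt
  refine ((differentiableAt_id.rpow_const (p := 1 - α) (Or.inl ht.ne')).mul
    hG).congr_of_eventuallyEq ?_
  filter_upwards [Ioi_mem_nhds ht] with s hs using abelIntegral_eq_rpow_mul_integral hs

lemma continuousWithinAt_abelIntegral_zero (hα1 : α < 1) (hh : ContinuousOn h (Ici 0)) :
    ContinuousWithinAt (abelIntegral α h) (Ici 0) 0 := by
  obtain ⟨C, hC⟩ := isCompact_Icc.exists_bound_of_continuousOn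
    (hh.mono (Icc_subset_Ici_self : Icc (0:ℝ) 1 ⊆ Ici 0))
  rw [ContinuousWithinAt, abelIntegral_zero]
  refine squeeze_zero_norm' (a := fun s => C * (s ^ (1 - α) / (1 - α))) ?_ ?_
  · filter_upwards [Icc_mem_nhdsGE zero_lt_one] with s hs
    simpa [abelIntegral] using abs_integral_sub_rpow_neg_mul_le hα1 hs.1
      (fun r hr => hC r ⟨hr.1.le, hr.2.trans hs.2⟩)
  · have hcont : ContinuousAt (fun s : ℝ => C * (s ^ (1 - α) / (1 - α))) 0 :=
      ((continuousAt_rpow_const 0 (1 - α) (Or.inr (by linarith))).div_const _).const_mul C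
    simpa [zero_rpow (by linarith : 1 - α ≠ 0)] using hcont.tendsto.mono_left nhdsWithin_le_nhds

lemma continuousOn_abelIntegral (hα1 : α < 1)
    (hdiff : ∀ x ≥ 0, DifferentiableAt ℝ h x) (hderiv : ContinuousOn (deriv h) (Ici 0)) :
    ContinuousOn (abelIntegral α h) (Ici 0) := by
  intro t ht
  rcases (mem_Ici.1 ht).eq_or_lt with rfl | ht
  · exact continuousWithinAt_abelIntegral_zero hα1
      fun x hx => (hdiff x hx).continuousAt.continuousWithinAt
  · exact (differentiableAt_abelIntegral hα1 hdiff hderiv ht).continuousAt.continuousWithinAt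

lemma integral_rlDeriv (hα1 : α < 1)
    (hdiff : ∀ x ≥ 0, DifferentiableAt ℝ h x) (hderiv : ContinuousOn (deriv h) (Ici 0))
    (hrl : ContinuousOn (rlDeriv α h) (Ici 0)) {t : ℝ} (ht : 0 ≤ t) :
    ∫ s in (0:ℝ)..t, rlDeriv α h s = 1 / Gamma (1 - α) * abelIntegral α h t := by
  have hftc := integral_eq_sub_of_hasDerivAt_of_le ht
    (((continuousOn_abelIntegral hα1 hdiff hderiv).mono Icc_subset_Ici_self).const_smul
      (1 / Gamma (1 - α)))
    (fun x hx => by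
      rw [rlDeriv_eq_deriv_abelIntegral]
      exact ((differentiableAt_abelIntegral hα1 hdiff hderiv hx.1).const_mul _).hasDerivAt)
    ((hrl.mono Icc_subset_Ici_self).intervalIntegrable_of_Icc ht)
  simpa using hftc

end AbelIntegral

section Volterra

variable {α : ℝ}

lemma integral_eq_integral_of_eqOn_zero {f : ℝ → ℝ} {a b c : ℝ} (hab : a ≤ b)
    (hbc : b ≤ c) (hf : IntervalIntegrable f volume a c) (hzero : EqOn f 0 (Icc a b)) :
    ∫ x in a..c, f x = ∫ x in b..c, f x := by
  have hsub₁ : uIcc a b ⊆ uIcc a c := by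
    rw [uIcc_of_le hab, uIcc_of_le (hab.trans hbc)]
    exact Icc_subset_Icc_right hbc
  have hsub₂ : uIcc b c ⊆ uIcc a c := by
    rw [uIcc_of_le hbc, uIcc_of_le (hab.trans hbc)]
    exact Icc_subset_Icc_left hab
  rw [← integral_add_adjacent_intervals (hf.mono_set hsub₁) (hf.mono_set hsub₂),
    integral_congr (g := fun _ => 0) fun x hx => hzero (by rwa [uIcc_of_le hab] at hx),
    intervalIntegral.integral_zero, zero_add]

variable {A B : ℝ} {u : ℝ → ℝ}

lemma eqOn_zero_Icc_add (hα1 : α < 1) (hu : ContinuousOn u (Ici 0))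
    (h : ∀ t ≥ 0, u t = A * (∫ s in (0:ℝ)..t, u s) + B * abelIntegral α u t)
    {a δ : ℝ} (ha : 0 ≤ a) (hδ : 0 ≤ δ)
    (hsmall : |A| * δ + |B| * (δ ^ (1 - α) / (1 - α)) < 1)
    (hzero : EqOn u 0 (Icc 0 a)) : EqOn u 0 (Icc 0 (a + δ)) := by
  obtain ⟨x, hx, hmax⟩ := isCompact_Icc.exists_isMaxOn (nonempty_Icc.2 (by linarith))
    (hu.mono fun r hr => ha.trans hr.1 : ContinuousOn u (Icc a (a + δ))).abs
  have hbound : ∀ r ∈ Ioc a x, |u r| ≤ |u x| := fun r hr =>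
    hmax ⟨hr.1.le, hr.2.trans hx.2⟩
  have hx0 : 0 ≤ x := ha.trans hx.1
  have hcont : ContinuousOn u (uIcc 0 x) :=
    hu.mono (by rw [uIcc_of_le hx0]; exact Icc_subset_Ici_self)
  have hint : |∫ s in (0:ℝ)..x, u s| ≤ |u x| * δ := by
    rw [integral_eq_integral_of_eqOn_zero ha hx.1 hcont.intervalIntegrable hzero]
    refine (intervalIntegral.norm_integral_le_of_norm_le_const (f := u) (C := |u x|)
      fun r hr => ?_).trans ?_
    · rw [Real.norm_eq_abs]
      exact hbound r (by rwa [uIoc_of_le hx.1] at hr)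
    rw [abs_of_nonneg (sub_nonneg.2 hx.1)]
    exact mul_le_mul_of_nonneg_left (by linarith [hx.2]) (abs_nonneg _)
  have habel : |abelIntegral α u x| ≤ |u x| * (δ ^ (1 - α) / (1 - α)) := by
    rw [abelIntegral, integral_eq_integral_of_eqOn_zero ha hx.1
      ((intervalIntegrable_sub_rpow_neg hα1 0 x).mul_continuousOn hcont)
      fun r hr => by simp [hzero hr]]
    refine (abs_integral_sub_rpow_neg_mul_le hα1 hx.1 hbound).trans ?_
    have : 0 < 1 - α := by linarith
    gcongr <;> linarith [hx.1, hx.2]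
  have hM : |u x| ≤ (|A| * δ + |B| * (δ ^ (1 - α) / (1 - α))) * |u x| :=
    calc |u x| ≤ |A| * |∫ s in (0:ℝ)..x, u s| + |B| * |abelIntegral α u x| := by
          rw [h x hx0, ← abs_mul, ← abs_mul]; exact abs_add_le _ _
      _ ≤ |A| * (|u x| * δ) + |B| * (|u x| * (δ ^ (1 - α) / (1 - α))) := by gcongr
      _ = _ := by ring
  have hM0 : |u x| ≤ 0 := by nlinarith [abs_nonneg (u x)]
  intro s hs
  rcases le_or_gt s a with hsa | hsa
  · exact hzero ⟨hs.1, hsa⟩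
  · exact abs_nonpos_iff.1 ((hmax ⟨hsa.le, hs.2⟩).trans hM0)

theorem eqOn_zero_of_eq_integral_add_abelIntegral (hα1 : α < 1) (hu : ContinuousOn u (Ici 0))
    (h : ∀ t ≥ 0, u t = A * (∫ s in (0:ℝ)..t, u s) + B * abelIntegral α u t) :
    EqOn u 0 (Ici 0) := by
  obtain ⟨δ, hδ, hsmall⟩ : ∃ δ > 0, |A| * δ + |B| * (δ ^ (1 - α) / (1 - α)) < 1 := by
    have hcont : ContinuousAt (fun δ : ℝ => |A| * δ + |B| * (δ ^ (1 - α) / (1 - α))) 0 :=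
      (continuousAt_const.mul continuousAt_id).add (continuousAt_const.mul
        ((continuousAt_rpow_const 0 (1 - α) (Or.inr (by linarith))).div_const _))
    refine (hcont.eventually (gt_mem_nhds ?_)).exists_gt
    simp [zero_rpow (by linarith : 1 - α ≠ 0)]
  have hsteps : ∀ n : ℕ, EqOn u 0 (Icc 0 (n * δ)) := by
    intro n
    induction n with
    | zero =>
      intro s hs
      rw [Nat.cast_zero, zero_mul, Icc_self, mem_singleton_iff] at hs
      simpa [hs] using h 0 le_rfl
    | succ n ih =>
      rw [Nat.cast_succ, add_one_mul]
      exact eqOn_zero_Icc_add hα1 hu h (by positivity) hδ.le hsmall ih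
  intro t ht
  obtain ⟨n, hn⟩ := exists_nat_ge (t / δ)
  exact hsteps n ⟨ht, (div_le_iff₀ hδ).1 hn⟩

end Volterra

lemma integral_eq_of_deriv_add_rlDeriv_eq {α lam γ : ℝ} {h f : ℝ → ℝ} (hα1 : α < 1)
    (hdiff : ∀ x ≥ 0, DifferentiableAt ℝ h x) (hderiv : ContinuousOn (deriv h) (Ici 0))
    (hrl : ContinuousOn (rlDeriv α h) (Ici 0))
    (heq : ∀ t ≥ 0, deriv h t + lam * (h t + γ * rlDeriv α h t) = f t)
    {t : ℝ} (ht : 0 ≤ t) :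
    h t - h 0 + lam * ((∫ s in (0:ℝ)..t, h s) + γ * (1 / Gamma (1 - α) * abelIntegral α h t))
      = ∫ s in (0:ℝ)..t, f s := by
  have hsub : uIcc 0 t ⊆ Ici 0 := by rw [uIcc_of_le ht]; exact Icc_subset_Ici_self
  have hd : IntervalIntegrable (deriv h) volume 0 t := (hderiv.mono hsub).intervalIntegrable
  have hh : IntervalIntegrable h volume 0 t :=
    ContinuousOn.intervalIntegrable fun x hx => (hdiff x (hsub hx)).continuousAt.continuousWithinAt
  have hr : IntervalIntegrable (rlDeriv α h) volume 0 t := (hrl.mono hsub).intervalIntegrable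
  have hftc : ∫ s in (0:ℝ)..t, deriv h s = h t - h 0 :=
    integral_eq_sub_of_hasDerivAt (fun x hx => (hdiff x (hsub hx)).hasDerivAt) hd
  calc _ = ∫ s in (0:ℝ)..t, (deriv h s + lam * (h s + γ * rlDeriv α h s)) := by
        rw [integral_add hd ((hh.add (hr.const_mul γ)).const_mul lam),
          intervalIntegral.integral_const_mul, integral_add hh (hr.const_mul γ),
          intervalIntegral.integral_const_mul, hftc, integral_rlDeriv hα1 hdiff hderiv hrl ht]
    _ = ∫ s in (0:ℝ)..t, f s := integral_congr fun s hs => heq s (hsub hs)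

theorem stmt_18_general (α γ lam y₀ : ℝ) (hα1 : α < 1)
    (f y z : ℝ → ℝ)
    (hy_diff : ∀ t ≥ (0:ℝ), DifferentiableAt ℝ y t)
    (hz_diff : ∀ t ≥ (0:ℝ), DifferentiableAt ℝ z t)
    (hy'_cont : ContinuousOn (deriv y) (Set.Ici 0))
    (hz'_cont : ContinuousOn (deriv z) (Set.Ici 0))
    (hyα_cont : ContinuousOn (rlDeriv α y) (Set.Ici 0))
    (hzα_cont : ContinuousOn (rlDeriv α z) (Set.Ici 0))
    (hy : ∀ t ≥ (0:ℝ), deriv y t + lam * (y t + γ * rlDeriv α y t) = f t)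
    (hz : ∀ t ≥ (0:ℝ), deriv z t + lam * (z t + γ * rlDeriv α z t) = f t)
    (hy0 : y 0 = y₀) (hz0 : z 0 = y₀) :
    ∀ t ≥ (0:ℝ), y t = z t := by
  have hyc : ContinuousOn y (Ici 0) := fun t ht => (hy_diff t ht).continuousAt.continuousWithinAt
  have hzc : ContinuousOn z (Ici 0) := fun t ht => (hz_diff t ht).continuousAt.continuousWithinAt
  have hdiff_zero : EqOn (fun t => y t - z t) 0 (Ici 0) := by
    refine eqOn_zero_of_eq_integral_add_abelIntegral hα1 (A := -lam)
      (B := -(lam * γ / Gamma (1 - α))) (hyc.sub hzc) fun t ht => ?_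
    have hsub : uIcc 0 t ⊆ Ici 0 := by rw [uIcc_of_le ht]; exact Icc_subset_Ici_self
    have hyt := integral_eq_of_deriv_add_rlDeriv_eq hα1 hy_diff hy'_cont hyα_cont hy ht
    have hzt := integral_eq_of_deriv_add_rlDeriv_eq hα1 hz_diff hz'_cont hzα_cont hz ht
    rw [integral_sub (hyc.mono hsub).intervalIntegrable (hzc.mono hsub).intervalIntegrable,
      abelIntegral_sub hα1 (hyc.mono hsub) (hzc.mono hsub)]
    linear_combination hyt - hzt + hy0 - hz0
  exact fun t ht => sub_eq_zero.1 (hdiff_zero ht)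

theorem stmt_18 (α γ lam y₀ : ℝ) (hα : 0 < α) (hα1 : α < 1)
    (hγ : 0 < γ) (hlam : 0 < lam)
    (f y z : ℝ → ℝ)
    (hy_diff : ∀ t ≥ (0:ℝ), DifferentiableAt ℝ y t)
    (hz_diff : ∀ t ≥ (0:ℝ), DifferentiableAt ℝ z t)
    (hy'_cont : ContinuousOn (deriv y) (Set.Ici 0))
    (hz'_cont : ContinuousOn (deriv z) (Set.Ici 0))
    (hyα_cont : ContinuousOn (rlDeriv α y) (Set.Ici 0))
    (hzα_cont : ContinuousOn (rlDeriv α z) (Set.Ici 0))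
    (hy : ∀ t ≥ (0:ℝ), deriv y t + lam * (y t + γ * rlDeriv α y t) = f t)
    (hz : ∀ t ≥ (0:ℝ), deriv z t + lam * (z t + γ * rlDeriv α z t) = f t)
    (hy0 : y 0 = y₀) (hz0 : z 0 = y₀) :
    ∀ t ≥ (0:ℝ), y t = z t :=
  stmt_18_general α γ lam y₀ hα1 f y z hy_diff hz_diff hy'_cont hz'_cont hyα_cont hzα_cont hy hz hy0
    hz0
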